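/- arXiv:2108.09498 — 2 statements merged into one kernel-verified Lean document; each statement's English description precedes it below -/
import Mathlib

section
/- Let θ_1,…,θ_L ∈ [0,π), let φ_1,…,φ_L ∈ ℂ^T with ‖φ_l‖₂ = 1, let c_1,…,c_L > 0, and set X = Σ_{l=1}^{L} c_l a(θ_l) φ_l^*. Suppose there exists V ∈ ℂ^{N×T} such that V^* a(θ_l) = φ_l for every l = 1,…,L and sup_{θ ∈ [0,π)} ‖V^* a(θ)‖₂ ≤ 1. Then the atomic norm of X equals the sum of the coefficients: ‖X‖_𝒜 = Σ_{l=1}^{L} c_l. -/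
open Matrix Complex Set
open scoped ENNReal Pointwise

noncomputable section

/-- Receive steering vector `a(θ) ∈ ℂ^N`. -/
def steer (N : ℕ) (Δr : ℝ) (θ : ℝ) : Fin N → ℂ :=
  fun n => ((1 / Real.sqrt N : ℝ) : ℂ) *
    Complex.exp (-(Complex.I * (2 * Real.pi * Δr * (n : ℕ) * Real.cos θ)))

/-- The atom `a(θ)φ^* ∈ ℂ^{N×T}`. -/
def atomMat (N T : ℕ) (Δr : ℝ) (θ : ℝ) (φ : EuclideanSpace ℂ (Fin T)) :
    Matrix (Fin N) (Fin T) ℂ :=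
  Matrix.of fun n t => steer N Δr θ n * (starRingEnd ℂ) (φ t)

/-- The atomic set `𝒜`. -/
def atomSet (N T : ℕ) (Δr : ℝ) : Set (Matrix (Fin N) (Fin T) ℂ) :=
  {A | ∃ θ ∈ Set.Ico (0 : ℝ) Real.pi, ∃ φ : EuclideanSpace ℂ (Fin T),
    ‖φ‖ = 1 ∧ A = atomMat N T Δr θ φ}

/-- The atomic norm `‖X‖_𝒜 = inf {t > 0 : X ∈ t · conv 𝒜}`, with `inf ∅ = ∞`. -/
def atomicNorm (N T : ℕ) (Δr : ℝ) (X : Matrix (Fin N) (Fin T) ℂ) : ℝ≥0∞ :=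
  sInf {t : ℝ≥0∞ | ∃ r : ℝ, 0 < r ∧ t = ENNReal.ofReal r ∧
    X ∈ r • convexHull ℝ (atomSet N T Δr)}

/-- Vector-valued dual polynomial `q(θ) = V^* a(θ) ∈ ℂ^T`. -/
def dualPoly (N T : ℕ) (Δr : ℝ) (V : Matrix (Fin N) (Fin T) ℂ) (θ : ℝ) :
    EuclideanSpace ℂ (Fin T) :=
  WithLp.toLp 2 (fun t => ∑ n, (starRingEnd ℂ) (V n t) * steer N Δr θ n)

/-- Row selection `P_Ω` on matrices. -/
def rowSel {N T : ℕ} (Ω : Finset (Fin N)) (X : Matrix (Fin N) (Fin T) ℂ) :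
    Matrix Ω (Fin T) ℂ :=
  Matrix.of fun i t => X i.1 t

/-- Row selection `P_Ω` on vectors. -/
def rowSelVec {N : ℕ} (Ω : Finset (Fin N)) (x : Fin N → ℂ) : Ω → ℂ :=
  fun i => x i.1


/-!
The real part of the Frobenius pairing with the certificate `V` is a real linear functional
`f` with `f (a(θ)φ^*) = Re ⟪φ, V^* a(θ)⟫ ≤ ‖φ‖ ‖V^* a(θ)‖ ≤ 1` on every atom, hence on the
convex hull of the atoms; since `f X = ∑ c_l ‖φ_l‖² = ∑ c_l`, no `r < ∑ c_l` can have
`X ∈ r • conv 𝒜`. Conversely `X / r` is a convex combination of the atoms `a(θ_l)φ_l^*`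
and of `0 ∈ conv 𝒜` (the atoms come in pairs `±A`) for every `r ≥ ∑ c_l`.
-/

theorem Convex.sum_smul_mem_smul_of_zero_mem {E : Type*} [AddCommGroup E] [Module ℝ E]
    {K : Set E} (hK : Convex ℝ K) (h0 : (0 : E) ∈ K) {ι : Type*} [Fintype ι]
    {w : ι → ℝ} {z : ι → E} (hw : ∀ i, 0 ≤ w i) (hz : ∀ i, z i ∈ K) {r : ℝ} (hr : 0 < r)
    (hwr : ∑ i, w i ≤ r) : ∑ i, w i • z i ∈ r • K := by
  refine ⟨r⁻¹ • ∑ i, w i • z i, ?_, smul_inv_smul₀ hr.ne' _⟩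
  -- the missing weight `1 - r⁻¹ ∑ w` is put on the point `0 ∈ K`
  have hmem := hK.sum_mem (t := Finset.univ)
    (w := fun o : Option ι => o.elim (1 - r⁻¹ * ∑ i, w i) fun i => r⁻¹ * w i)
    (z := fun o => o.elim 0 z) ?_ ?_ ?_
  · simpa [Fintype.sum_option, Finset.smul_sum, mul_smul] using hmem
  · rintro (_ | i) -
    · simpa [inv_mul_le_one₀ hr] using hwr
    · exact mul_nonneg (inv_nonneg.2 hr.le) (hw i)
  · simp [Fintype.sum_option, ← Finset.mul_sum]
  · rintro (_ | i) - <;> simp [h0, hz]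

theorem LinearMap.le_of_mem_smul_convexHull {E : Type*} [AddCommGroup E] [Module ℝ E]
    (f : E →ₗ[ℝ] ℝ) {s : Set E} (hf : ∀ z ∈ s, f z ≤ 1) {r : ℝ} (hr : 0 ≤ r) {x : E}
    (hx : x ∈ r • convexHull ℝ s) : f x ≤ r := by
  obtain ⟨y, hy, rfl⟩ := hx
  have hfy : f y ≤ 1 := convexHull_min hf (convex_halfSpace_le f.isLinear 1) hy
  simpa using mul_le_mul_of_nonneg_left hfy hr

theorem zero_mem_convexHull_of_neg_mem {E : Type*} [AddCommGroup E] [Module ℝ E]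
    {s : Set E} {a : E} (ha : a ∈ s) (hna : -a ∈ s) : (0 : E) ∈ convexHull ℝ s := by
  have h := convex_convexHull ℝ s (subset_convexHull ℝ s ha) (subset_convexHull ℝ s hna)
    (by norm_num : (0 : ℝ) ≤ 1 / 2) (by norm_num : (0 : ℝ) ≤ 1 / 2) (by norm_num)
  simpa using h

theorem atomMat_neg (N T : ℕ) (Δr θ : ℝ) (φ : EuclideanSpace ℂ (Fin T)) :
    atomMat N T Δr θ (-φ) = -atomMat N T Δr θ φ := by
  ext n t
  simp [atomMat]

theorem zero_mem_convexHull_atomSet (N : ℕ) {T : ℕ} (hT : 0 < T) (Δr : ℝ) :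
    (0 : Matrix (Fin N) (Fin T) ℂ) ∈ convexHull ℝ (atomSet N T Δr) := by
  set e : EuclideanSpace ℂ (Fin T) := EuclideanSpace.single ⟨0, hT⟩ 1
  have he : ‖e‖ = 1 := by simp [e]
  have h0 : (0 : ℝ) ∈ Ico 0 Real.pi := ⟨le_rfl, Real.pi_pos⟩
  exact zero_mem_convexHull_of_neg_mem ⟨0, h0, e, he, rfl⟩
    ⟨0, h0, -e, by rwa [norm_neg], (atomMat_neg N T Δr 0 e).symm⟩

theorem atomicNorm_eq_ofReal {N T : ℕ} {Δr : ℝ} {X : Matrix (Fin N) (Fin T) ℂ} {c : ℝ}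
    (hc : 0 ≤ c) (hupper : ∀ r, c < r → X ∈ r • convexHull ℝ (atomSet N T Δr))
    (hlower : ∀ r, 0 < r → X ∈ r • convexHull ℝ (atomSet N T Δr) → c ≤ r) :
    atomicNorm N T Δr X = ENNReal.ofReal c := by
  apply le_antisymm
  · refine ENNReal.le_of_forall_pos_le_add fun ε hε _ => ?_
    have hcε : c < c + ε := lt_add_of_pos_right c hε
    calc atomicNorm N T Δr X ≤ ENNReal.ofReal (c + ε) :=
          sInf_le ⟨c + ε, hc.trans_lt hcε, rfl, hupper _ hcε⟩
      _ = ENNReal.ofReal c + ε := by rw [ENNReal.ofReal_add hc ε.coe_nonneg, ENNReal.ofReal_coe_nnreal]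
  · refine le_sInf ?_
    rintro _ ⟨r, hr, rfl, hX⟩
    exact ENNReal.ofReal_le_ofReal (hlower r hr hX)

def dualPairing {m n : Type*} [Fintype m] [Fintype n] (V : Matrix m n ℂ) : Matrix m n ℂ →ₗ[ℝ] ℝ where
  toFun Y := (∑ i, ∑ j, star (V i j) * Y i j).re
  map_add' Y Z := by simp [mul_add, Finset.sum_add_distrib]
  map_smul' s Y := by
    simp only [Matrix.smul_apply, Complex.real_smul, mul_left_comm _ (s : ℂ), ← Finset.mul_sum,
      Complex.re_ofReal_mul, RingHom.id_apply, smul_eq_mul]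

theorem dualPairing_atomMat (N T : ℕ) (Δr θ : ℝ) (V : Matrix (Fin N) (Fin T) ℂ)
    (φ : EuclideanSpace ℂ (Fin T)) :
    dualPairing V (atomMat N T Δr θ φ) = (inner ℂ φ (dualPoly N T Δr V θ)).re := by
  simp only [dualPairing, LinearMap.coe_mk, AddHom.coe_mk, PiLp.inner_apply, RCLike.inner_apply,
    dualPoly, atomMat, Matrix.of_apply, Finset.sum_mul]
  rw [Finset.sum_comm]
  congr 1
  refine Finset.sum_congr rfl fun t _ => Finset.sum_congr rfl fun k _ => ?_
  simp only [Complex.star_def]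
  ring

theorem dualPairing_le_one_of_mem_atomSet {N T : ℕ} {Δr : ℝ} {V : Matrix (Fin N) (Fin T) ℂ}
    (hV : ∀ ϑ ∈ Ico (0 : ℝ) Real.pi, ‖dualPoly N T Δr V ϑ‖ ≤ 1) :
    ∀ A ∈ atomSet N T Δr, dualPairing V A ≤ 1 := by
  rintro _ ⟨ϑ, hϑ, φ, hφ, rfl⟩
  calc dualPairing V (atomMat N T Δr ϑ φ) = (inner ℂ φ (dualPoly N T Δr V ϑ)).re :=
        dualPairing_atomMat N T Δr ϑ V φ
    _ ≤ ‖φ‖ * ‖dualPoly N T Δr V ϑ‖ := (Complex.re_le_norm _).trans (norm_inner_le_norm _ _)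
    _ ≤ 1 := by rw [hφ, one_mul]; exact hV ϑ hϑ

theorem dualPairing_atomMat_eq_one {N T : ℕ} {Δr θ : ℝ} {V : Matrix (Fin N) (Fin T) ℂ}
    {φ : EuclideanSpace ℂ (Fin T)} (hq : dualPoly N T Δr V θ = φ) (hφ : ‖φ‖ = 1) :
    dualPairing V (atomMat N T Δr θ φ) = 1 := by
  rw [dualPairing_atomMat, hq, inner_self_eq_norm_sq_to_K, hφ]
  simp

theorem atomicNorm_eq_sum_coeffs_of_dual_certificate_general
    (N T : ℕ) (hT : 1 ≤ T) (Δr : ℝ)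
    (L : ℕ)
    (θ : Fin L → ℝ)
    (hθ : ∀ l, θ l ∈ Set.Ico (0 : ℝ) Real.pi)
    (φ : Fin L → EuclideanSpace ℂ (Fin T))
    (hφ : ∀ l, ‖φ l‖ = 1)
    (c : Fin L → ℝ)
    (hc : ∀ l, 0 < c l)
    (X : Matrix (Fin N) (Fin T) ℂ)
    (hX : X = ∑ l, c l • atomMat N T Δr (θ l) (φ l))
    (V : Matrix (Fin N) (Fin T) ℂ)
    (hVinterp : ∀ l, dualPoly N T Δr V (θ l) = φ l)
    (hVbound : ∀ ϑ ∈ Set.Ico (0 : ℝ) Real.pi, ‖dualPoly N T Δr V ϑ‖ ≤ 1) :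
    atomicNorm N T Δr X = ENNReal.ofReal (∑ l, c l) := by
  have hsum : 0 ≤ ∑ l, c l := Finset.sum_nonneg fun l _ => (hc l).le
  refine atomicNorm_eq_ofReal hsum (fun r hr => ?_) (fun r hr hXr => ?_)
  · rw [hX]
    exact (convex_convexHull ℝ _).sum_smul_mem_smul_of_zero_mem
      (zero_mem_convexHull_atomSet N hT Δr) (fun l => (hc l).le)
      (fun l => subset_convexHull ℝ _ ⟨θ l, hθ l, φ l, hφ l, rfl⟩) (hsum.trans_lt hr) hr.le
  · have hf := (dualPairing V).le_of_mem_smul_convexHull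
      (dualPairing_le_one_of_mem_atomSet hVbound) hr.le hXr
    simpa [hX, dualPairing_atomMat_eq_one (hVinterp _) (hφ _)] using hf

/-- a dual certificate interpolating the sign pattern and bounded
by one certifies that the atomic norm equals the sum of the coefficients. -/
theorem atomicNorm_eq_sum_coeffs_of_dual_certificate
    (N T : ℕ) (hN : 1 ≤ N) (hT : 1 ≤ T) (Δr : ℝ) (hΔr : 0 < Δr)
    (L : ℕ)
    (θ : Fin L → ℝ)
    (hθ : ∀ l, θ l ∈ Set.Ico (0 : ℝ) Real.pi)
    (φ : Fin L → EuclideanSpace ℂ (Fin T))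
    (hφ : ∀ l, ‖φ l‖ = 1)
    (c : Fin L → ℝ)
    (hc : ∀ l, 0 < c l)
    (X : Matrix (Fin N) (Fin T) ℂ)
    (hX : X = ∑ l, c l • atomMat N T Δr (θ l) (φ l))
    (V : Matrix (Fin N) (Fin T) ℂ)
    (hVinterp : ∀ l, dualPoly N T Δr V (θ l) = φ l)
    (hVbound : ∀ ϑ ∈ Set.Ico (0 : ℝ) Real.pi, ‖dualPoly N T Δr V ϑ‖ ≤ 1) :
    atomicNorm N T Δr X = ENNReal.ofReal (∑ l, c l) :=
  atomicNorm_eq_sum_coeffs_of_dual_certificate_general N T hT Δr L θ hθ φ hφ c hc X hX V hVinterp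
    hVbound

end
end

section
/- (Support localization via the dual polynomial.) Let V ∈ ℂ^{N×T} satisfy sup_{θ ∈ [0,π)} ‖V^* a(θ)‖₂ ≤ 1, and let S = { θ ∈ [0,π) : ‖V^* a(θ)‖₂ = 1 }. Suppose X = Σ_{l=1}^{L} c_l a(θ_l) φ_l^* with distinct angles θ_l ∈ [0,π), c_l > 0, unit vectors φ_l ∈ ℂ^T, and suppose the decomposition attains equality in the dual pairing: Re Tr(X^* V) = Σ_{l=1}^{L} c_l. Then every angle of the decomposition lies in S, i.e. θ_l ∈ S for all l, and moreover φ_l = V^* a(θ_l) for all l. -/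
open Matrix Complex Set
open scoped ENNReal Pointwise

noncomputable section

/-!
The trace pairing of an atom `a(θ)φ^*` with `V` is `⟪q(θ), φ⟫` with `q(θ) = V^* a(θ)`, and its
real part is at most `‖q(θ)‖ ‖φ‖ ≤ 1`. Equality in `Re Tr(X^* V) = ∑ c_l` with positive weights therefore forces
every `Re ⟪q(θ_l), φ_l⟫ = 1`, and then `‖q(θ_l) - φ_l‖² = ‖q(θ_l)‖² - 1 ≤ 0`.
-/

theorem eq_of_norm_le_one_of_re_inner_eq_one {𝕜 E : Type*} [RCLike 𝕜] [NormedAddCommGroup E]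
    [InnerProductSpace 𝕜 E] {x y : E} (hx : ‖x‖ ≤ 1) (hy : ‖y‖ = 1)
    (hxy : RCLike.re (inner 𝕜 x y) = 1) : x = y := by
  have hsq : ‖x - y‖ ^ 2 ≤ 0 := by
    rw [norm_sub_sq (𝕜 := 𝕜), hxy, hy]
    nlinarith [norm_nonneg x]
  rw [← sub_eq_zero, ← norm_eq_zero]
  exact pow_eq_zero_iff two_ne_zero |>.mp (le_antisymm hsq (sq_nonneg _))

theorem Finset.eq_one_of_sum_mul_eq_sum {ι : Type*} {s : Finset ι} {c a : ι → ℝ}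
    (hc : ∀ i ∈ s, 0 < c i) (ha : ∀ i ∈ s, a i ≤ 1)
    (h : ∑ i ∈ s, c i * a i = ∑ i ∈ s, c i) : ∀ i ∈ s, a i = 1 := by
  have hle : ∀ i ∈ s, c i * a i ≤ c i := fun i hi =>
    mul_le_of_le_one_right (hc i hi).le (ha i hi)
  intro i hi
  have := (Finset.sum_eq_sum_iff_of_le hle).mp h i hi
  exact mul_left_cancel₀ (hc i hi).ne' (by rw [this, mul_one])

theorem trace_conjTranspose_atomMat_mul (N T : ℕ) (Δr θ : ℝ) (V : Matrix (Fin N) (Fin T) ℂ)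
    (φ : EuclideanSpace ℂ (Fin T)) :
    trace ((atomMat N T Δr θ φ)ᴴ * V) = inner ℂ (dualPoly N T Δr V θ) φ := by
  simp only [trace, diag, mul_apply, conjTranspose_apply, atomMat, dualPoly, of_apply,
    PiLp.inner_apply, RCLike.inner_apply, star_mul', starRingEnd_apply, star_star, star_sum,
    Finset.mul_sum]
  exact Finset.sum_congr rfl fun t _ => Finset.sum_congr rfl fun n _ => by ring

theorem re_trace_conjTranspose_sum_smul_atomMat_mul {ι : Type*} (s : Finset ι) (N T : ℕ)
    (Δr : ℝ) (V : Matrix (Fin N) (Fin T) ℂ) (c θ : ι → ℝ) (φ : ι → EuclideanSpace ℂ (Fin T)) :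
    (trace ((∑ l ∈ s, c l • atomMat N T Δr (θ l) (φ l))ᴴ * V)).re
      = ∑ l ∈ s, c l * (inner ℂ (dualPoly N T Δr V (θ l)) (φ l)).re := by
  simp only [conjTranspose_sum, Matrix.sum_mul, trace_sum, re_sum, conjTranspose_smul,
    star_trivial, smul_mul, trace_smul, trace_conjTranspose_atomMat_mul, real_smul,
    re_ofReal_mul]

theorem support_localization_dual_polynomial_general
    (N T : ℕ) (Δr : ℝ)
    (V : Matrix (Fin N) (Fin T) ℂ)
    (hVbound : ∀ θ ∈ Set.Ico (0 : ℝ) Real.pi, ‖dualPoly N T Δr V θ‖ ≤ 1)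
    (S : Set ℝ)
    (hS : S = {θ ∈ Set.Ico (0 : ℝ) Real.pi | ‖dualPoly N T Δr V θ‖ = 1})
    (L : ℕ)
    (θ : Fin L → ℝ)
    (hθ : ∀ l, θ l ∈ Set.Ico (0 : ℝ) Real.pi)
    (c : Fin L → ℝ)
    (hc : ∀ l, 0 < c l)
    (φ : Fin L → EuclideanSpace ℂ (Fin T))
    (hφ : ∀ l, ‖φ l‖ = 1)
    (X : Matrix (Fin N) (Fin T) ℂ)
    (hX : X = ∑ l, c l • atomMat N T Δr (θ l) (φ l))
    (hequality : (Matrix.trace (Xᴴ * V)).re = ∑ l, c l) :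
    ∀ l, θ l ∈ S ∧ φ l = dualPoly N T Δr V (θ l) := by
  have hre_le : ∀ l ∈ Finset.univ, (inner ℂ (dualPoly N T Δr V (θ l)) (φ l)).re ≤ 1 :=
    fun l _ => calc
      _ ≤ ‖dualPoly N T Δr V (θ l)‖ * ‖φ l‖ := re_inner_le_norm (𝕜 := ℂ) _ _
      _ ≤ 1 := by rw [hφ l, mul_one]; exact hVbound _ (hθ l)
  have hre_eq : ∀ l ∈ Finset.univ, (inner ℂ (dualPoly N T Δr V (θ l)) (φ l)).re = 1 :=
    Finset.eq_one_of_sum_mul_eq_sum (fun l _ => hc l) hre_le <| by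
      rw [← hequality, hX, re_trace_conjTranspose_sum_smul_atomMat_mul]
  intro l
  have hq : dualPoly N T Δr V (θ l) = φ l :=
    eq_of_norm_le_one_of_re_inner_eq_one (𝕜 := ℂ) (hVbound _ (hθ l)) (hφ l)
      (hre_eq l (Finset.mem_univ l))
  exact ⟨hS ▸ ⟨hθ l, hq ▸ hφ l⟩, hq.symm⟩

/-- support localization via the dual polynomial.  If the dual
pairing attains the sum of coefficients, every angle of the decomposition lies
where the dual polynomial has unit norm, and the sign vectors are interpolated. -/
theorem support_localization_dual_polynomial
    (N T : ℕ) (hN : 1 ≤ N) (hT : 1 ≤ T) (Δr : ℝ) (hΔr : 0 < Δr)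
    (V : Matrix (Fin N) (Fin T) ℂ)
    (hVbound : ∀ θ ∈ Set.Ico (0 : ℝ) Real.pi, ‖dualPoly N T Δr V θ‖ ≤ 1)
    (S : Set ℝ)
    (hS : S = {θ ∈ Set.Ico (0 : ℝ) Real.pi | ‖dualPoly N T Δr V θ‖ = 1})
    (L : ℕ)
    (θ : Fin L → ℝ)
    (hθ : ∀ l, θ l ∈ Set.Ico (0 : ℝ) Real.pi)
    (hdistinct : Function.Injective θ)
    (c : Fin L → ℝ)
    (hc : ∀ l, 0 < c l)
    (φ : Fin L → EuclideanSpace ℂ (Fin T))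
    (hφ : ∀ l, ‖φ l‖ = 1)
    (X : Matrix (Fin N) (Fin T) ℂ)
    (hX : X = ∑ l, c l • atomMat N T Δr (θ l) (φ l))
    (hequality : (Matrix.trace (Xᴴ * V)).re = ∑ l, c l) :
    ∀ l, θ l ∈ S ∧ φ l = dualPoly N T Δr V (θ l) :=
  support_localization_dual_polynomial_general N T Δr V hVbound S hS L θ hθ c hc φ hφ X hX hequality

end
end
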